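/- Let A and B be graph-consistent hashgraphs on n parties, and let x and y be events contained in both A and B. If x strongly sees y in A, then x strongly sees y in B. -/

import Mathlib

open Classical

attribute [local instance] Classical.propDecidable

noncomputable section

/-- A hashgraph: a finite set of events together with (optional) self-parent and
other-parent pointers, a round assignment and a vote function
(`vote y x` is the vote cast by witness `y` in the famousness election of witness `x`).
Events are identified across hashgraphs: they come from a common type `E`, and their
creator, signature and timestamp are given by globally fixed functions `E → ℕ`. -/
structure Hashgraph (E : Type) where
  events : Finset E
  selfParent : E → Option E
  otherParent : E → Option E
  round : E → ℕ
  vote : E → E → Bool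

namespace Hashgraph

variable {E : Type}

/-- `H.Parent x y` : `y` is a parent of `x` in `H`. -/
def Parent (H : Hashgraph E) (x y : E) : Prop :=
  H.selfParent x = some y ∨ H.otherParent x = some y

/-- `H.Ancestor y x` : `y` is an ancestor of `x` in `H` (reflexively). -/
def Ancestor (H : Hashgraph E) (y x : E) : Prop :=
  Relation.ReflTransGen H.Parent x y

/-- `H.SelfAncestor y x` : `y` is a self-ancestor of `x` in `H` (reflexively). -/
def SelfAncestor (H : Hashgraph E) (y x : E) : Prop :=
  Relation.ReflTransGen (fun a b => H.selfParent a = some b) x y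

/-- `(x, y)` is a fork in `H`: same creator, neither an ancestor of the other. -/
def Fork (creator : E → ℕ) (H : Hashgraph E) (x y : E) : Prop :=
  creator x = creator y ∧ ¬ H.Ancestor x y ∧ ¬ H.Ancestor y x

/-- `x` observes a fork from party `p` in `H`. -/
def ObservesForkFrom (creator : E → ℕ) (H : Hashgraph E) (x : E) (p : ℕ) : Prop :=
  ∃ z z', H.Ancestor z x ∧ H.Ancestor z' x ∧ creator z = p ∧ creator z' = p ∧
    Fork creator H z z'

/-- `x` sees `y` in `H`. -/
def Sees (creator : E → ℕ) (H : Hashgraph E) (x y : E) : Prop :=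
  H.Ancestor y x ∧ ¬ ObservesForkFrom creator H x (creator y)

/-- `x` strongly sees `y` in `H`: `x` sees more than `2n/3` events with pairwise
distinct creators, each of which sees `y`. -/
def StronglySees (creator : E → ℕ) (n : ℕ) (H : Hashgraph E) (x y : E) : Prop :=
  ∃ S : Finset E, (↑S : Set E) ⊆ (↑H.events : Set E) ∧
    (∀ z ∈ S, Sees creator H x z ∧ Sees creator H z y) ∧
    Set.InjOn creator ↑S ∧ 2 * n < 3 * S.card

/-- An event is a witness if it has no self-parent or its round exceeds its
self-parent's round. -/
def Witness (H : Hashgraph E) (x : E) : Prop :=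
  x ∈ H.events ∧ ∀ y, H.selfParent x = some y → H.round y < H.round x

/-- The maximum round among the parents of `x` (0 for a missing parent). -/
def maxParentRound (H : Hashgraph E) (x : E) : ℕ :=
  max (match H.selfParent x with | some y => H.round y | none => 0)
      (match H.otherParent x with | some y => H.round y | none => 0)

/-- `x` strongly sees more than `2n/3` round-`r` witnesses with distinct creators. -/
def PromotedAt (creator : E → ℕ) (n : ℕ) (H : Hashgraph E) (x : E) (r : ℕ) : Prop :=
  ∃ S : Finset E, (↑S : Set E) ⊆ (↑H.events : Set E) ∧
    (∀ w ∈ S, H.Witness w ∧ H.round w = r ∧ StronglySees creator n H x w) ∧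
    Set.InjOn creator ↑S ∧ 2 * n < 3 * S.card

/-- The set of round-`r` witnesses strongly seen by `y`. -/
def ssWitnesses (creator : E → ℕ) (n : ℕ) (H : Hashgraph E) (y : E) (r : ℕ) : Finset E :=
  H.events.filter (fun w => H.Witness w ∧ H.round w = r ∧ StronglySees creator n H y w)

/-- The majority vote in `x`'s election among the events of `s` (`true` i.e. yes on a tie). -/
def majorityVote (H : Hashgraph E) (x : E) (s : Finset E) : Bool :=
  decide (s.card ≤ 2 * (s.filter (fun w => H.vote w x = true)).card)

/-- The middle bit of a signature. -/
def middleBit (s : ℕ) : Bool := s.testBit (s.size / 2)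

/-- Validity of a hashgraph on `n` parties with coin-round period `c`, with respect to
globally fixed creators, signatures and timestamps: creators lie in `{1, …, n}`,
parents of events are events, a self-parent has the same creator, an other-parent a
different one, the graph is acyclic, rounds satisfy the recursive round assignment,
and votes satisfy the recursive voting rule of famousness elections. -/
structure Valid (creator sig ts : E → ℕ) (n c : ℕ) (H : Hashgraph E) : Prop where
  creator_mem : ∀ x ∈ H.events, 1 ≤ creator x ∧ creator x ≤ n
  selfParent_mem : ∀ x ∈ H.events, ∀ y, H.selfParent x = some y → y ∈ H.events
  otherParent_mem : ∀ x ∈ H.events, ∀ y, H.otherParent x = some y → y ∈ H.events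
  selfParent_creator : ∀ x ∈ H.events, ∀ y, H.selfParent x = some y → creator y = creator x
  otherParent_creator : ∀ x ∈ H.events, ∀ y, H.otherParent x = some y → creator y ≠ creator x
  acyclic : ∀ x ∈ H.events, ∀ y ∈ H.events, H.Ancestor x y → H.Ancestor y x → x = y
  round_genesis : ∀ x ∈ H.events, H.selfParent x = none → H.otherParent x = none →
    H.round x = 1
  round_spec : ∀ x ∈ H.events, (H.selfParent x ≠ none ∨ H.otherParent x ≠ none) →
    H.round x = if PromotedAt creator n H x (H.maxParentRound x)
      then H.maxParentRound x + 1 else H.maxParentRound x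
  vote_first : ∀ x ∈ H.events, H.Witness x → ∀ y ∈ H.events, H.Witness y →
    H.round y = H.round x + 1 → H.vote y x = decide (Sees creator H y x)
  vote_later : ∀ x ∈ H.events, H.Witness x → ∀ y ∈ H.events, H.Witness y →
    H.round x + 1 < H.round y →
    H.vote y x =
      if ¬ (c ∣ (H.round y - H.round x)) then
        majorityVote H x (ssWitnesses creator n H y (H.round y - 1))
      else if 2 * n < 3 * ((ssWitnesses creator n H y (H.round y - 1)).filter
          (fun w => H.vote w x = majorityVote H x (ssWitnesses creator n H y (H.round y - 1)))).card then
        majorityVote H x (ssWitnesses creator n H y (H.round y - 1))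
      else middleBit (sig y)

/-- `A` and `B` are graph-consistent: every event contained in both has the same
parent pointers and the same ancestors in `A` and in `B`. -/
def GraphConsistent (A B : Hashgraph E) : Prop :=
  ∀ x, x ∈ A.events → x ∈ B.events →
    A.selfParent x = B.selfParent x ∧ A.otherParent x = B.otherParent x ∧
    ∀ y, (A.Ancestor y x ↔ B.Ancestor y x)

/-- `H` decides the fame of the witness `x` to be `v`. -/
def Decides (creator : E → ℕ) (n c : ℕ) (H : Hashgraph E) (x : E) (v : Bool) : Prop :=
  H.Witness x ∧ ∃ y ∈ H.events, H.Witness y ∧ H.round x + 2 ≤ H.round y ∧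
    ¬ (c ∣ (H.round y - H.round x)) ∧
    2 * n < 3 * ((ssWitnesses creator n H y (H.round y - 1)).filter
      (fun w => H.vote w x = v)).card

/-- `x` is a unique famous witness of `H`: famous, and the only famous witness
with its creator and round. -/
def UniqueFamous (creator : E → ℕ) (n c : ℕ) (H : Hashgraph E) (x : E) : Prop :=
  Decides creator n c H x true ∧
    ∀ y ∈ H.events, Decides creator n c H y true → creator y = creator x →
      H.round y = H.round x → y = x

/-- The defining property of `roundReceived R` (without minimality): the fame of every
witness of round at most `R` has been decided, and every round-`R` unique famous
witness sees `x`. -/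
def RRAt (creator : E → ℕ) (n c : ℕ) (H : Hashgraph E) (x : E) (R : ℕ) : Prop :=
  (∀ w ∈ H.events, H.Witness w → H.round w ≤ R → ∃ v, Decides creator n c H w v) ∧
  (∀ w ∈ H.events, UniqueFamous creator n c H w → H.round w = R → Sees creator H w x)

/-- `x` has roundReceived `R` in `H`: `R` is the least round satisfying `RRAt`. -/
def RoundReceived (creator : E → ℕ) (n c : ℕ) (H : Hashgraph E) (x : E) (R : ℕ) : Prop :=
  RRAt creator n c H x R ∧ ∀ R' < R, ¬ RRAt creator n c H x R'

/-- The median of a multiset of naturals. -/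
def medianOf (l : Multiset ℕ) : ℕ :=
  (Multiset.sort l (· ≤ ·)).getD (Multiset.card l / 2) 0

/-- The set containing, for each round-`R` unique famous witness `y` of `H`, the
earliest self-ancestor of `y` having `x` as an ancestor. -/
def tsContributors (creator : E → ℕ) (n c : ℕ) (H : Hashgraph E) (x : E) (R : ℕ) : Finset E :=
  H.events.filter (fun z => ∃ y ∈ H.events, UniqueFamous creator n c H y ∧ H.round y = R ∧
    H.SelfAncestor z y ∧ H.Ancestor x z ∧ ∀ z', H.selfParent z = some z' → ¬ H.Ancestor x z')

/-- The logical timestamp of `x`, given its roundReceived `R`. -/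
def logicalTimestamp (creator ts : E → ℕ) (n c : ℕ) (H : Hashgraph E) (x : E) (R : ℕ) : ℕ :=
  medianOf ((tsContributors creator n c H x R).val.map ts)

/-- The whitened signature of `x`, given its roundReceived `R`: the XOR of `x`'s
signature with the signatures of all round-`R` unique famous witnesses. -/
def whitenedSig (creator sig : E → ℕ) (n c : ℕ) (H : Hashgraph E) (x : E) (R : ℕ) : ℕ :=
  (Multiset.sort
    ((H.events.filter (fun y => UniqueFamous creator n c H y ∧ H.round y = R)).val.map sig) (· ≤ ·)).foldr
    Nat.xor (sig x)

/-- The roundReceived of `x` in `H`, as a value. -/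
def rrVal (creator : E → ℕ) (n c : ℕ) (H : Hashgraph E) (x : E) : ℕ :=
  sInf {R | RoundReceived creator n c H x R}

/-- The sort key of an event: roundReceived, then logical timestamp, then whitened
signature. -/
def key (creator sig ts : E → ℕ) (n c : ℕ) (H : Hashgraph E) (x : E) : ℕ × ℕ × ℕ :=
  (rrVal creator n c H x,
   logicalTimestamp creator ts n c H x (rrVal creator n c H x),
   whitenedSig creator sig n c H x (rrVal creator n c H x))

/-- Lexicographic comparison of sort keys. -/
def keyLE (a b : ℕ × ℕ × ℕ) : Prop :=
  a.1 < b.1 ∨ (a.1 = b.1 ∧ (a.2.1 < b.2.1 ∨ (a.2.1 = b.2.1 ∧ a.2.2 ≤ b.2.2)))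

/-- `L` is the log of `H`: the list of all events of `H` that have a roundReceived,
sorted lexicographically by roundReceived, then logical timestamp, then whitened
signature. -/
def IsLog (creator sig ts : E → ℕ) (n c : ℕ) (H : Hashgraph E) (L : List E) : Prop :=
  (↑L : Multiset E) = (H.events.filter (fun x => ∃ R, RoundReceived creator n c H x R)).val ∧
  L.Pairwise (fun a b => keyLE (key creator sig ts n c H a) (key creator sig ts n c H b))

/-- No two events of `H` created by the same honest (non-corrupted) party form a
fork in `H`. -/
def HonestForkFree1 (creator : E → ℕ) (corrupted : Finset ℕ) (H : Hashgraph E) : Prop :=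
  ∀ x ∈ H.events, ∀ y ∈ H.events, creator x = creator y → creator x ∉ corrupted →
    (H.Ancestor x y ∨ H.Ancestor y x)

/-- No two events created by the same honest party, in any of the hashgraphs `A`, `B`,
form a fork. -/
def HonestForkFree2 [DecidableEq E] (creator : E → ℕ) (corrupted : Finset ℕ)
    (A B : Hashgraph E) : Prop :=
  ∀ x ∈ A.events ∪ B.events, ∀ y ∈ A.events ∪ B.events,
    creator x = creator y → creator x ∉ corrupted →
    ((x ∈ A.events ∧ y ∈ A.events ∧ (A.Ancestor x y ∨ A.Ancestor y x)) ∨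
     (x ∈ B.events ∧ y ∈ B.events ∧ (B.Ancestor x y ∨ B.Ancestor y x)))

/-- `H` is fork-free: no two of its events form a fork. -/
def ForkFree (creator : E → ℕ) (H : Hashgraph E) : Prop :=
  ∀ x ∈ H.events, ∀ y ∈ H.events, creator x = creator y →
    (H.Ancestor x y ∨ H.Ancestor y x)

/-- `H'` extends `H`: every event of `H` is an event of `H'` with the same parent
pointers (and hence the same round and votes). -/
def Extends (H' H : Hashgraph E) : Prop :=
  H.events ⊆ H'.events ∧ ∀ x ∈ H.events,
    H'.selfParent x = H.selfParent x ∧ H'.otherParent x = H.otherParent x ∧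
    H'.round x = H.round x ∧ ∀ y ∈ H.events, H'.vote x y = H.vote x y

/-- `w` strongly sees more than `2n/3` round-`r` witnesses with distinct creators,
all of which vote `v` in `x`'s famousness election (i.e. `w` does not determine its
round vote by coin flip). -/
def SeesQuorumVoting (creator : E → ℕ) (n : ℕ) (H : Hashgraph E) (w x : E) (r : ℕ)
    (v : Bool) : Prop :=
  ∃ S : Finset E, (↑S : Set E) ⊆ (↑H.events : Set E) ∧
    (∀ u ∈ S, H.Witness u ∧ H.round u = r ∧ StronglySees creator n H w u ∧ H.vote u x = v) ∧
    Set.InjOn creator ↑S ∧ 2 * n < 3 * S.card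

end Hashgraph

/- Everything that `x` sees, and every fork it observes, lives among the ancestors of `x`
(and of the events of the fork), and graph-consistency says exactly that these ancestor
sets agree in `A` and `B`. Since both hashgraphs are closed under parents, the events
involved belong to both, so the witnessing set for `x` strongly seeing `y` in `A` works
unchanged in `B`. -/

namespace Hashgraph

variable {E : Type}

def ParentClosed (H : Hashgraph E) : Prop :=
  ∀ x ∈ H.events, ∀ y, H.Parent x y → y ∈ H.events

theorem Valid.parentClosed {creator sig ts : E → ℕ} {n c : ℕ} {H : Hashgraph E}
    (hH : H.Valid creator sig ts n c) : H.ParentClosed := by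
  rintro x hx y (hy | hy)
  · exact hH.selfParent_mem x hx y hy
  · exact hH.otherParent_mem x hx y hy

theorem ParentClosed.mem_of_ancestor {H : Hashgraph E} (hH : H.ParentClosed) {x y : E}
    (hx : x ∈ H.events) (h : H.Ancestor y x) : y ∈ H.events := by
  induction h with
  | refl => exact hx
  | tail _ hp ih => exact hH _ ih _ hp

namespace GraphConsistent

variable {A B : Hashgraph E}

theorem symm (hcons : GraphConsistent A B) : GraphConsistent B A := fun x hxB hxA =>
  let ⟨hself, hother, hanc⟩ := hcons x hxA hxB
  ⟨hself.symm, hother.symm, fun y => (hanc y).symm⟩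

theorem ancestor_iff (hcons : GraphConsistent A B) {x : E} (hxA : x ∈ A.events)
    (hxB : x ∈ B.events) (y : E) : A.Ancestor y x ↔ B.Ancestor y x :=
  (hcons x hxA hxB).2.2 y

theorem observesForkFrom {creator : E → ℕ} (hcons : GraphConsistent A B)
    (hA : A.ParentClosed) (hB : B.ParentClosed) {x : E} (hxA : x ∈ A.events)
    (hxB : x ∈ B.events) {p : ℕ} (h : ObservesForkFrom creator A x p) :
    ObservesForkFrom creator B x p := by
  obtain ⟨z, z', hz, hz', hcz, hcz', hczz', hzz', hz'z⟩ := h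
  have hzB := (hcons.ancestor_iff hxA hxB z).mp hz
  have hz'B := (hcons.ancestor_iff hxA hxB z').mp hz'
  have consistent_at {w : E} (hwA : A.Ancestor w x) (hwB : B.Ancestor w x) :=
    hcons.ancestor_iff (hA.mem_of_ancestor hxA hwA) (hB.mem_of_ancestor hxB hwB)
  exact ⟨z, z', hzB, hz'B, hcz, hcz', hczz', fun h => hzz' ((consistent_at hz' hz'B z).mpr h),
    fun h => hz'z ((consistent_at hz hzB z').mpr h)⟩

theorem sees {creator : E → ℕ} (hcons : GraphConsistent A B)
    (hA : A.ParentClosed) (hB : B.ParentClosed) {x y : E} (hxA : x ∈ A.events)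
    (hxB : x ∈ B.events) (h : Sees creator A x y) : Sees creator B x y :=
  ⟨(hcons.ancestor_iff hxA hxB y).mp h.1,
    fun hfork => h.2 (hcons.symm.observesForkFrom hB hA hxB hxA hfork)⟩

theorem stronglySees {creator : E → ℕ} {n : ℕ} (hcons : GraphConsistent A B)
    (hA : A.ParentClosed) (hB : B.ParentClosed) {x y : E} (hxA : x ∈ A.events)
    (hxB : x ∈ B.events) (h : StronglySees creator n A x y) : StronglySees creator n B x y := by
  obtain ⟨S, hSA, hsees, hinj, hcard⟩ := h
  have hSB : ∀ z ∈ S, z ∈ B.events := fun z hz =>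
    hB.mem_of_ancestor hxB ((hcons.ancestor_iff hxA hxB z).mp (hsees z hz).1.1)
  refine ⟨S, hSB, fun z hz => ⟨?_, ?_⟩, hinj, hcard⟩
  · exact hcons.sees hA hB hxA hxB (hsees z hz).1
  · exact hcons.sees hA hB (hSA hz) (hSB z hz) (hsees z hz).2

end GraphConsistent

end Hashgraph

open Hashgraph

theorem stmt3_general {E : Type} (creator sig ts : E → ℕ) (n c : ℕ)
    (A B : Hashgraph E)
    (hA : A.Valid creator sig ts n c) (hB : B.Valid creator sig ts n c)
    (hcons : GraphConsistent A B)
    (x y : E) (hxA : x ∈ A.events) (hxB : x ∈ B.events)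
    (h : StronglySees creator n A x y) : StronglySees creator n B x y :=
  hcons.stronglySees hA.parentClosed hB.parentClosed hxA hxB h

/-- Strongly seeing is consistent: for graph-consistent hashgraphs `A` and `B` and
events `x`, `y` contained in both, if `x` strongly sees `y` in `A` then `x` strongly
sees `y` in `B`. -/
theorem stmt3 {E : Type} (creator sig ts : E → ℕ) (n c : ℕ)
    (A B : Hashgraph E)
    (hA : A.Valid creator sig ts n c) (hB : B.Valid creator sig ts n c)
    (hcons : GraphConsistent A B)
    (x y : E) (hxA : x ∈ A.events) (hxB : x ∈ B.events)
    (hyA : y ∈ A.events) (hyB : y ∈ B.events)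
    (h : StronglySees creator n A x y) : StronglySees creator n B x y :=
  stmt3_general creator sig ts n c A B hA hB hcons x y hxA hxB h
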